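/- Assume all agents have additive cost functions and let α ≥ 1. Every α-EF1 allocation is ((2α+1)/(α+1))-PMMS. Moreover this bound is tight: for every n ≥ 2 and α ≥ 1 there exists an n-agent instance with additive cost functions, an α-EF1 allocation A, an agent i and an agent j ≠ i with c_i(A_i) = ((2α+1)/(α+1))·MMS_i(2, A_i ∪ A_j). -/

import Mathlib

open Finset

/-- `T` is a `k`-partition of the bundle `S`: pairwise disjoint bundles whose union is `S`. -/
def IsPartitionOf {E : Type*} [DecidableEq E] {k : ℕ} (T : Fin k → Finset E) (S : Finset E) :
    Prop :=
  (∀ i j : Fin k, i ≠ j → Disjoint (T i) (T j)) ∧ Finset.univ.biUnion T = S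

/-- The maximin share of cost function `c` on `S` among `k` agents:
the minimum over `k`-partitions of `S` of the maximum cost of a bundle. -/
noncomputable def MMS {E : Type*} [DecidableEq E] (c : Finset E → ℝ) (k : ℕ) (S : Finset E) :
    ℝ :=
  sInf { m : ℝ | ∃ T : Fin k → Finset E, IsPartitionOf T S ∧ m = ⨆ j : Fin k, c (T j) }

/-- `c` is a nonnegative additive cost function. -/
def AdditiveCost {E : Type*} [DecidableEq E] (c : Finset E → ℝ) : Prop :=
  (∀ S : Finset E, 0 ≤ c S) ∧ ∀ S : Finset E, c S = ∑ e ∈ S, c {e}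

/-- `c` is a nonnegative monotone cost function with `c ∅ = 0`. -/
def MonotoneCost {E : Type*} (c : Finset E → ℝ) : Prop :=
  (∀ S : Finset E, 0 ≤ c S) ∧ c ∅ = 0 ∧ ∀ ⦃S T : Finset E⦄, S ⊆ T → c S ≤ c T

/-- `c` is subadditive. -/
def SubadditiveCost {E : Type*} [DecidableEq E] (c : Finset E → ℝ) : Prop :=
  ∀ S T : Finset E, c (S ∪ T) ≤ c S + c T

/-- `c` is submodular. -/
def SubmodularCost {E : Type*} [DecidableEq E] (c : Finset E → ℝ) : Prop :=
  ∀ S T : Finset E, c (S ∪ T) + c (S ∩ T) ≤ c S + c T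

/-- `A` is an allocation of all chores among the `n` agents. -/
def IsAllocation {E : Type*} [DecidableEq E] [Fintype E] {n : ℕ} (A : Fin n → Finset E) : Prop :=
  IsPartitionOf A Finset.univ

/-- `A` is `α`-envy-free. -/
def IsEF {E : Type*} {n : ℕ} (α : ℝ) (c : Fin n → Finset E → ℝ) (A : Fin n → Finset E) : Prop :=
  ∀ i j, c i (A i) ≤ α * c i (A j)

/-- `A` is `α`-envy-free up to one item. -/
def IsEF1 {E : Type*} [DecidableEq E] {n : ℕ} (α : ℝ) (c : Fin n → Finset E → ℝ)
    (A : Fin n → Finset E) : Prop :=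
  ∀ i j, i ≠ j → A i = ∅ ∨ ∃ e ∈ A i, c i (A i \ {e}) ≤ α * c i (A j)

/-- `A` is `α`-envy-free up to any (positive-cost) item. -/
def IsEFX {E : Type*} [DecidableEq E] {n : ℕ} (α : ℝ) (c : Fin n → Finset E → ℝ)
    (A : Fin n → Finset E) : Prop :=
  ∀ i j, i ≠ j → ∀ e ∈ A i, 0 < c i {e} → c i (A i \ {e}) ≤ α * c i (A j)

/-- `A` is an `α`-MMS allocation. -/
def IsMMSFair {E : Type*} [DecidableEq E] [Fintype E] {n : ℕ} (α : ℝ)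
    (c : Fin n → Finset E → ℝ) (A : Fin n → Finset E) : Prop :=
  ∀ i, c i (A i) ≤ α * MMS (c i) n Finset.univ

/-- `A` is an `α`-PMMS allocation. -/
def IsPMMS {E : Type*} [DecidableEq E] {n : ℕ} (α : ℝ)
    (c : Fin n → Finset E → ℝ) (A : Fin n → Finset E) : Prop :=
  ∀ i j, i ≠ j → c i (A i) ≤ α * MMS (c i) 2 (A i ∪ A j)

/-- The optimal (minimum) social cost over all allocations. -/
noncomputable def OPT {E : Type*} [DecidableEq E] [Fintype E] {n : ℕ}
    (c : Fin n → Finset E → ℝ) : ℝ :=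
  sInf { s : ℝ | ∃ A : Fin n → Finset E, IsAllocation A ∧ s = ∑ i, c i (A i) }

/-!
Suppose agent `i` holds `X`, agent `j` holds `Y`, and `c (X \ {e}) ≤ α * c Y` for some `e ∈ X`.
If a `2`-partition of `X ∪ Y` has larger part of cost `μ`, then `c X + c Y ≤ 2μ` and `c {e} ≤ μ`,
so `(α + 1) c X ≤ α (c X + c Y) + c {e} ≤ (2α + 1) μ`.

For tightness, let all agents share chore costs `α + 1, α, 1, 1, …`; agent `0` gets the first two
chores and every other agent one chore of cost `1`. Agent `0` pays `2α + 1`, is `α`-EF1 after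
dropping the first chore, and her bundle together with agent `1`'s splits as `{α + 1} ∪ {α, 1}`,
so the pairwise maximin share is `α + 1`.
-/

open Function

section MaximinShare

variable {E : Type*} [DecidableEq E] {c : Finset E → ℝ} {k : ℕ} {S : Finset E}

lemma isPartitionOf_pair {S₁ S₂ : Finset E} (hd : Disjoint S₁ S₂) :
    IsPartitionOf ![S₁, S₂] (S₁ ∪ S₂) := by
  refine ⟨fun a b hab => ?_, by ext; simp [Fin.exists_fin_two]⟩
  fin_cases a <;> fin_cases b <;> simp_all [disjoint_comm]

lemma exists_isPartitionOf_two (S : Finset E) : ∃ T : Fin 2 → Finset E, IsPartitionOf T S :=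
  ⟨![S, ∅], by simpa using isPartitionOf_pair (disjoint_empty_right S)⟩

lemma MMS_le_of_isPartitionOf (hc : ∀ S, 0 ≤ c S) {T : Fin k → Finset E}
    (hT : IsPartitionOf T S) : MMS c k S ≤ ⨆ j, c (T j) := by
  refine csInf_le ⟨0, ?_⟩ ⟨T, hT, rfl⟩
  rintro _ ⟨T', -, rfl⟩
  exact Real.iSup_nonneg fun j => hc (T' j)

lemma le_MMS_of_forall_isPartitionOf {b : ℝ} (hS : ∃ T : Fin k → Finset E, IsPartitionOf T S)
    (h : ∀ T : Fin k → Finset E, IsPartitionOf T S → b ≤ ⨆ j, c (T j)) : b ≤ MMS c k S := by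
  obtain ⟨T, hT⟩ := hS
  refine le_csInf ⟨_, T, hT, rfl⟩ ?_
  rintro _ ⟨T', hT', rfl⟩
  exact h T' hT'

end MaximinShare

lemma additiveCost_sum {E : Type*} [DecidableEq E] {w : E → ℝ} (hw : ∀ e, 0 ≤ w e) :
    AdditiveCost fun S => ∑ e ∈ S, w e :=
  ⟨fun S => sum_nonneg fun e _ => hw e, fun S => by simp⟩

namespace AdditiveCost

variable {E : Type*} [DecidableEq E] {c : Finset E → ℝ} {S T : Finset E}

lemma mono (hc : AdditiveCost c) (hST : S ⊆ T) : c S ≤ c T := by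
  rw [hc.2 S, hc.2 T]
  exact sum_le_sum_of_subset_of_nonneg hST fun e _ _ => hc.1 {e}

lemma empty (hc : AdditiveCost c) : c ∅ = 0 := by
  rw [hc.2, sum_empty]

lemma union_of_disjoint (hc : AdditiveCost c) (hd : Disjoint S T) : c (S ∪ T) = c S + c T := by
  rw [hc.2 S, hc.2 T, hc.2 (S ∪ T), sum_union hd]

lemma sdiff_singleton (hc : AdditiveCost c) {e : E} (he : e ∈ S) :
    c (S \ {e}) = c S - c {e} := by
  rw [eq_sub_iff_add_eq, ← hc.union_of_disjoint sdiff_disjoint,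
    sdiff_union_of_subset (singleton_subset_iff.mpr he)]

variable {k : ℕ} {P : Fin k → Finset E}

lemma eq_sum_of_isPartitionOf (hc : AdditiveCost c) (hP : IsPartitionOf P S) :
    c S = ∑ j, c (P j) := by
  rw [← hP.2, hc.2, sum_biUnion fun i _ j _ hij => hP.1 i j hij]
  exact sum_congr rfl fun j _ => (hc.2 (P j)).symm

lemma le_mul_iSup_of_isPartitionOf (hc : AdditiveCost c) (hP : IsPartitionOf P S) :
    c S ≤ k * ⨆ j, c (P j) := by
  rw [hc.eq_sum_of_isPartitionOf hP]
  simpa using sum_le_sum fun j (_ : j ∈ univ) =>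
    le_ciSup (Finite.bddAbove_range fun j => c (P j)) j

lemma singleton_le_iSup_of_isPartitionOf (hc : AdditiveCost c) (hP : IsPartitionOf P S) {e : E}
    (he : e ∈ S) : c {e} ≤ ⨆ j, c (P j) := by
  rw [← hP.2] at he
  obtain ⟨j, -, hj⟩ := mem_biUnion.mp he
  exact (hc.mono (singleton_subset_iff.mpr hj)).trans
    (le_ciSup (Finite.bddAbove_range fun j => c (P j)) j)

variable {α : ℝ} {X Y : Finset E}

lemma mul_le_iSup_of_EF1 (hc : AdditiveCost c) (hα : 0 ≤ α)
    (hEF1 : X = ∅ ∨ ∃ e ∈ X, c (X \ {e}) ≤ α * c Y) (hXY : Disjoint X Y)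
    {P : Fin 2 → Finset E} (hP : IsPartitionOf P (X ∪ Y)) :
    (α + 1) / (2 * α + 1) * c X ≤ ⨆ j, c (P j) := by
  have hμ : 0 ≤ ⨆ j, c (P j) := Real.iSup_nonneg fun j => hc.1 (P j)
  rw [div_mul_eq_mul_div, div_le_iff₀ (by linarith)]
  rcases hEF1 with rfl | ⟨e, he, hle⟩
  · rw [hc.empty, mul_zero]
    positivity
  have hsum : c X + c Y ≤ 2 * ⨆ j, c (P j) := by
    rw [← hc.union_of_disjoint hXY]
    exact_mod_cast hc.le_mul_iSup_of_isPartitionOf hP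
  have hce : c {e} ≤ ⨆ j, c (P j) :=
    hc.singleton_le_iSup_of_isPartitionOf hP (mem_union_left Y he)
  rw [hc.sdiff_singleton he] at hle
  nlinarith

lemma le_mul_MMS_two_of_EF1 (hc : AdditiveCost c) (hα : 0 ≤ α)
    (hEF1 : X = ∅ ∨ ∃ e ∈ X, c (X \ {e}) ≤ α * c Y) (hXY : Disjoint X Y) :
    c X ≤ (2 * α + 1) / (α + 1) * MMS c 2 (X ∪ Y) := by
  have h := le_MMS_of_forall_isPartitionOf (exists_isPartitionOf_two _) fun P hP =>
    hc.mul_le_iSup_of_EF1 hα hEF1 hXY hP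
  calc c X = (2 * α + 1) / (α + 1) * ((α + 1) / (2 * α + 1) * c X) := by
        field_simp
    _ ≤ (2 * α + 1) / (α + 1) * MMS c 2 (X ∪ Y) := by gcongr

end AdditiveCost

theorem IsEF1.isPMMS {E : Type*} [DecidableEq E] {n : ℕ} {α : ℝ} {c : Fin n → Finset E → ℝ}
    {A : Fin n → Finset E} (hEF1 : IsEF1 α c A) (hα : 0 ≤ α) (hc : ∀ i, AdditiveCost (c i))
    (hA : Pairwise (Disjoint on A)) : IsPMMS ((2 * α + 1) / (α + 1)) c A :=
  fun i j hij => (hc i).le_mul_MMS_two_of_EF1 hα (hEF1 i j hij) (hA hij)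

lemma isAllocation_fiber {E : Type*} [DecidableEq E] [Fintype E] {n : ℕ} (f : E → Fin n) :
    IsAllocation fun i => ({e | f e = i} : Finset E) :=
  ⟨fun i j hij => disjoint_filter.mpr fun _ _ hi hj => hij (hi.symm.trans hj), by ext; simp⟩

section Tight

variable (α : ℝ) {m : ℕ}

def tightWeight (e : Fin (m + 3)) : ℝ :=
  if e = 0 then α + 1 else if e = 1 then α else 1

def tightCost (S : Finset (Fin (m + 3))) : ℝ :=
  ∑ e ∈ S, tightWeight α e

/-- Agent `0` gets chores `0` and `1`, agent `i + 1` gets chore `i + 2`. -/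
def tightAlloc (n : ℕ) (i : Fin (n + 2)) : Finset (Fin (n + 3)) :=
  {e | Fin.predAbove 0 e = i}

variable {α}

lemma additiveCost_tightCost (hα : 0 ≤ α) : AdditiveCost (tightCost α (m := m)) :=
  additiveCost_sum fun e => by unfold tightWeight; split_ifs <;> linarith

lemma tightAlloc_zero (n : ℕ) : tightAlloc n 0 = {0, 1} := by
  ext e
  cases e using Fin.cases with
  | zero => simp [tightAlloc]
  | succ e =>
    simp only [tightAlloc, mem_filter, mem_univ, true_and, Fin.predAbove_zero_succ, mem_insert,
      mem_singleton, Fin.succ_ne_zero, false_or]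
    rw [← Fin.succ_zero_eq_one, Fin.succ_inj]

lemma tightAlloc_succ (n : ℕ) (i : Fin (n + 1)) : tightAlloc n i.succ = {i.succ.succ} := by
  ext e
  cases e using Fin.cases with
  | zero => simp [tightAlloc, eq_comm (a := (0 : Fin _))]
  | succ e => simp [tightAlloc]

lemma isEF1_tightAlloc (n : ℕ) (hα : 0 ≤ α) : IsEF1 α (fun _ => tightCost α) (tightAlloc n) := by
  intro i j hij
  right
  cases i using Fin.cases with
  | zero =>
    obtain ⟨j, rfl⟩ := Fin.exists_succ_eq.mpr hij.symm
    refine ⟨0, by simp [tightAlloc_zero], ?_⟩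
    have h10 : (1 : Fin (n + 3)) ≠ 0 := one_ne_zero
    have hj1 : j.succ.succ ≠ 1 := by
      rw [← Fin.succ_zero_eq_one, Ne, Fin.succ_inj]
      exact Fin.succ_ne_zero j
    simp [tightAlloc_zero, tightAlloc_succ, tightCost, tightWeight, h10, hj1]
  | succ i =>
    refine ⟨i.succ.succ, by simp [tightAlloc_succ], ?_⟩
    dsimp only
    rw [tightAlloc_succ, sdiff_self, bot_eq_empty, (additiveCost_tightCost hα).empty]
    exact mul_nonneg hα ((additiveCost_tightCost hα).1 _)

lemma MMS_tightCost (hα : 0 ≤ α) :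
    MMS (tightCost α) 2 ({0, 1, 2} : Finset (Fin (m + 3))) = α + 1 := by
  have h01 : (0 : Fin (m + 3)) ≠ 1 := zero_ne_one
  have h2 : 2 % (m + 3) = 2 := Nat.mod_eq_of_lt (by omega)
  have h02 : (0 : Fin (m + 3)) ≠ 2 := by simp [Fin.ext_iff, h2]
  have h12 : (1 : Fin (m + 3)) ≠ 2 := by simp [Fin.ext_iff, h2]
  have hc := additiveCost_tightCost (m := m) hα
  apply le_antisymm
  · have hP : IsPartitionOf ![{0}, {1, 2}] ({0, 1, 2} : Finset (Fin (m + 3))) :=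
      isPartitionOf_pair (by simp [h01, h02])
    refine (MMS_le_of_isPartitionOf hc.1 hP).trans (ciSup_le fun j => ?_)
    fin_cases j <;> simp [tightCost, tightWeight, h01.symm, h02.symm, h12.symm, sum_pair h12]
  · refine le_MMS_of_forall_isPartitionOf (exists_isPartitionOf_two _) fun P hP => ?_
    simpa [tightCost, tightWeight] using
      hc.singleton_le_iSup_of_isPartitionOf hP (e := 0) (by simp)

lemma tightCost_tightAlloc_zero (n : ℕ) (hα : 0 ≤ α) :
    tightCost α (tightAlloc n 0) =
      (2 * α + 1) / (α + 1) * MMS (tightCost α) 2 (tightAlloc n 0 ∪ tightAlloc n 1) := by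
  have hunion : tightAlloc n 0 ∪ tightAlloc n 1 = {0, 1, 2} := by
    rw [← Fin.succ_zero_eq_one, tightAlloc_zero, tightAlloc_succ]
    rfl
  have h10 : (1 : Fin (n + 3)) ≠ 0 := one_ne_zero
  rw [hunion, MMS_tightCost hα, div_mul_cancel₀ _ (by linarith), tightAlloc_zero, tightCost,
    sum_pair h10.symm]
  simp [tightWeight, h10]
  ring

end Tight

/-- Proposition 4.8: with additive cost functions, every `α`-EF1 allocation is
`(2α+1)/(α+1)`-PMMS, and this bound is tight. -/
theorem alphaEF1_is_PMMS_and_tight :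
    (∀ (E : Type) [DecidableEq E] [Fintype E] (n : ℕ), 2 ≤ n → ∀ α : ℝ, 1 ≤ α →
      ∀ c : Fin n → Finset E → ℝ, (∀ i, AdditiveCost (c i)) →
      ∀ A : Fin n → Finset E, IsAllocation A → IsEF1 α c A →
        IsPMMS ((2 * α + 1) / (α + 1)) c A) ∧
    (∀ n : ℕ, 2 ≤ n → ∀ α : ℝ, 1 ≤ α →
      ∃ (m : ℕ) (c : Fin n → Finset (Fin m) → ℝ) (A : Fin n → Finset (Fin m)),
        (∀ i, AdditiveCost (c i)) ∧ IsAllocation A ∧ IsEF1 α c A ∧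
        ∃ i j, i ≠ j ∧
          c i (A i) = ((2 * α + 1) / (α + 1)) * MMS (c i) 2 (A i ∪ A j)) := by
  refine ⟨fun E _ _ n _ α hα c hc A hA hEF1 =>
    hEF1.isPMMS (by linarith) hc fun i j => hA.1 i j, ?_⟩
  intro n hn α hα
  obtain ⟨k, rfl⟩ : ∃ k, n = k + 2 := ⟨n - 2, by omega⟩
  exact ⟨k + 3, fun _ => tightCost α, tightAlloc k, fun _ => additiveCost_tightCost (by linarith),
    isAllocation_fiber _, isEF1_tightAlloc k (by linarith), 0, 1, zero_ne_one,
    tightCost_tightAlloc_zero k (by linarith)⟩
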